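/- Let n be a natural number and let X, Y be nonzero n×n complex matrices. If sin Θ(X,Y) = 0, then sin Θ(|X*|,|Y*|) = 0 and sin Θ(|X|,|Y|) = 0. -/

import Mathlib

open Matrix
open scoped ComplexOrder

/-- Hilbert–Schmidt (Frobenius) norm: ‖X‖₂ = √(Re Tr(XᴴX)). -/
noncomputable def hsNorm {n : ℕ} (X : Matrix (Fin n) (Fin n) ℂ) : ℝ :=
  Real.sqrt ((Matrix.trace (Xᴴ * X)).re)

/-- Angle Θ(X,Y) = arccos(Re Tr(YᴴX) / (‖X‖₂‖Y‖₂)). -/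
noncomputable def theta {n : ℕ} (X Y : Matrix (Fin n) (Fin n) ℂ) : ℝ :=
  Real.arccos ((Matrix.trace (Yᴴ * X)).re / (hsNorm X * hsNorm Y))

/-- |X| : the positive semidefinite square root of XᴴX. -/
noncomputable def matAbs {n : ℕ} (X : Matrix (Fin n) (Fin n) ℂ) : Matrix (Fin n) (Fin n) ℂ :=
  let hA := (Matrix.posSemidef_conjTranspose_mul_self X).1
  (hA.eigenvectorUnitary : Matrix (Fin n) (Fin n) ℂ) *
    diagonal ((↑) ∘ (fun i => Real.sqrt (hA.eigenvalues i))) *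
    (star hA.eigenvectorUnitary : Matrix (Fin n) (Fin n) ℂ)

/-!
Vectorising a matrix turns `hsNorm` and `Re Tr(YᴴX)` into the Euclidean norm and real inner
product, so `theta` is the Euclidean angle, and `sin Θ(X,Y) = 0` says exactly that `Y = r • X`
for a real `r ≠ 0`. Then `Yᴴ = r • Xᴴ`, and `|r • X| = |r| • |X|` with `|X| ≠ 0`, so both angles
in the conclusion vanish.
-/

open InnerProductGeometry
open scoped InnerProductSpace MatrixOrder

lemma InnerProductGeometry.sin_angle_eq_zero_iff {V : Type*} [NormedAddCommGroup V]
    [InnerProductSpace ℝ V] {x y : V} :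
    Real.sin (angle x y) = 0 ↔ x ≠ 0 ∧ ∃ r : ℝ, r ≠ 0 ∧ y = r • x := by
  rw [sin_eq_zero_iff_angle_eq_zero_or_angle_eq_pi, angle_eq_zero_iff, angle_eq_pi_iff]
  constructor
  · rintro (⟨hx, r, hr, rfl⟩ | ⟨hx, r, hr, rfl⟩)
    exacts [⟨hx, r, hr.ne', rfl⟩, ⟨hx, r, hr.ne, rfl⟩]
  · rintro ⟨hx, r, hr, rfl⟩
    rcases hr.lt_or_gt with hr | hr
    exacts [.inr ⟨hx, r, hr, rfl⟩, .inl ⟨hx, r, hr, rfl⟩]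

lemma EuclideanSpace.real_inner_eq_re_inner {ι : Type*} [Fintype ι] (x y : EuclideanSpace ℂ ι) :
    ⟪x, y⟫_ℝ = (⟪x, y⟫_ℂ).re := by
  simp [PiLp.inner_apply, Complex.inner, Complex.re_sum]

namespace Matrix

section FrobeniusVec

variable {m k : Type*}

noncomputable def frobeniusVec (X : Matrix m k ℂ) : EuclideanSpace ℂ (k × m) :=
  WithLp.toLp 2 X.vec

lemma frobeniusVec_injective : Function.Injective (frobeniusVec : Matrix m k ℂ → _) :=
  (WithLp.toLp_injective 2).comp vec_bijective.injective

lemma frobeniusVec_zero : frobeniusVec (0 : Matrix m k ℂ) = 0 := rfl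

lemma frobeniusVec_smul (r : ℝ) (X : Matrix m k ℂ) :
    frobeniusVec (r • X) = r • frobeniusVec X := rfl

lemma inner_frobeniusVec [Fintype m] [Fintype k] (X Y : Matrix m k ℂ) :
    ⟪frobeniusVec X, frobeniusVec Y⟫_ℂ = (Xᴴ * Y).trace := by
  rw [frobeniusVec, frobeniusVec, EuclideanSpace.inner_toLp_toLp, dotProduct_comm,
    star_vec_dotProduct_vec]

end FrobeniusVec

variable {n : ℕ}

lemma hsNorm_eq_norm_frobeniusVec (X : Matrix (Fin n) (Fin n) ℂ) :
    hsNorm X = ‖frobeniusVec X‖ := by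
  rw [hsNorm, norm_eq_sqrt_re_inner (𝕜 := ℂ), inner_frobeniusVec]
  rfl

lemma theta_eq_angle (X Y : Matrix (Fin n) (Fin n) ℂ) :
    theta X Y = angle (frobeniusVec X) (frobeniusVec Y) := by
  rw [theta, angle, real_inner_comm, EuclideanSpace.real_inner_eq_re_inner, inner_frobeniusVec,
    hsNorm_eq_norm_frobeniusVec, hsNorm_eq_norm_frobeniusVec]

lemma sin_theta_eq_zero_iff {X Y : Matrix (Fin n) (Fin n) ℂ} :
    Real.sin (theta X Y) = 0 ↔ X ≠ 0 ∧ ∃ r : ℝ, r ≠ 0 ∧ Y = r • X := by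
  simp only [theta_eq_angle, sin_angle_eq_zero_iff, ← frobeniusVec_smul, ← frobeniusVec_zero,
    frobeniusVec_injective.eq_iff, ne_eq]

lemma hsNorm_conjTranspose (X : Matrix (Fin n) (Fin n) ℂ) : hsNorm Xᴴ = hsNorm X := by
  rw [hsNorm, hsNorm, conjTranspose_conjTranspose, trace_mul_comm]

lemma theta_conjTranspose (X Y : Matrix (Fin n) (Fin n) ℂ) : theta Xᴴ Yᴴ = theta X Y := by
  rw [theta, theta, hsNorm_conjTranspose, hsNorm_conjTranspose, conjTranspose_conjTranspose,
    trace_mul_comm, ← conjTranspose_conjTranspose Y, ← conjTranspose_mul, trace_conjTranspose]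
  simp

lemma matAbs_eq_cfcAbs (X : Matrix (Fin n) (Fin n) ℂ) : matAbs X = CFC.abs X := by
  rw [CFC.abs, star_eq_conjTranspose,
    CFC.sqrt_eq_real_sqrt _ (posSemidef_conjTranspose_mul_self X).nonneg, cfcₙ_eq_cfc,
    (posSemidef_conjTranspose_mul_self X).1.cfc_eq, IsHermitian.cfc, Unitary.conjStarAlgAut_apply]
  rfl

lemma matAbs_smul (r : ℝ) (X : Matrix (Fin n) (Fin n) ℂ) : matAbs (r • X) = |r| • matAbs X := by
  rw [matAbs_eq_cfcAbs, matAbs_eq_cfcAbs, CFC.abs_smul, Real.norm_eq_abs]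

lemma matAbs_ne_zero {X : Matrix (Fin n) (Fin n) ℂ} (hX : X ≠ 0) : matAbs X ≠ 0 := by
  rw [matAbs_eq_cfcAbs]
  intro h
  have h_sq := CFC.abs_mul_abs X
  rw [h, zero_mul, star_eq_conjTranspose, eq_comm, conjTranspose_mul_self_eq_zero] at h_sq
  exact hX h_sq

lemma sin_theta_matAbs_eq_zero {X Y : Matrix (Fin n) (Fin n) ℂ}
    (h : Real.sin (theta X Y) = 0) : Real.sin (theta (matAbs X) (matAbs Y)) = 0 := by
  obtain ⟨hX, r, hr, rfl⟩ := sin_theta_eq_zero_iff.mp h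
  rw [matAbs_smul]
  exact sin_theta_eq_zero_iff.mpr ⟨matAbs_ne_zero hX, |r|, abs_ne_zero.mpr hr, rfl⟩

end Matrix

theorem stmt_12_general {n : ℕ} (X Y : Matrix (Fin n) (Fin n) ℂ)
    (h : Real.sin (theta X Y) = 0) :
    Real.sin (theta (matAbs Xᴴ) (matAbs Yᴴ)) = 0 ∧
    Real.sin (theta (matAbs X) (matAbs Y)) = 0 :=
  ⟨sin_theta_matAbs_eq_zero (by rwa [theta_conjTranspose]), sin_theta_matAbs_eq_zero h⟩

theorem stmt_12 {n : ℕ} (X Y : Matrix (Fin n) (Fin n) ℂ) (hX : X ≠ 0) (hY : Y ≠ 0)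
    (h : Real.sin (theta X Y) = 0) :
    Real.sin (theta (matAbs Xᴴ) (matAbs Yᴴ)) = 0 ∧
    Real.sin (theta (matAbs X) (matAbs Y)) = 0 :=
  stmt_12_general X Y h
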